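/- Let Ω = [0, ∞) × ℝ with the subspace topology of ℝ², and define the interval-valued function U on Ω by: U(t, x) = [1, 1] if 0 ≤ t < 1 and x < t − 1; U(t, x) = [x/(t−1), x/(t−1)] if 0 ≤ t < 1 and t − 1 ≤ x ≤ 0; U(t, x) = [0, 0] if 0 ≤ t < 1 and x > 0; U(t, x) = [1, 1] if t ≥ 1 and x < (t−1)/2; U(t, (t−1)/2) = [0, 1] if t ≥ 1 (the interval spanned by the one-sided limits, i.e. the lower part of U equals 0 and the upper part equals 1 on the line x = (t−1)/2, t ≥ 1); and U(t, x) = [0, 0] if t ≥ 1 and x > (t−1)/2. Then U is Hausdorff-continuous on Ω (with the Baire operators taken with respect to the subspace topology of Ω). -/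
import Mathlib


open Filter Topology

/-- The lower Baire operator: `I(g)(x)` is the sup over neighbourhoods `V` of `x`
of the inf of `g` over `V`. -/
noncomputable def lowerBaire {X : Type*} [TopologicalSpace X] (g : X → EReal) (x : X) : EReal :=
  ⨆ V ∈ nhds x, ⨅ y ∈ V, g y

/-- The upper Baire operator: `S(g)(x)` is the inf over neighbourhoods `V` of `x`
of the sup of `g` over `V`. -/
noncomputable def upperBaire {X : Type*} [TopologicalSpace X] (g : X → EReal) (x : X) : EReal :=
  ⨅ V ∈ nhds x, ⨆ y ∈ V, g y

/-- The pair `(lo, hi)` is an interval-valued function (`lo ≤ hi` pointwise) which is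
segment-continuous: `I(lo) = lo` and `S(hi) = hi`. -/
def IsSCont {X : Type*} [TopologicalSpace X] (lo hi : X → EReal) : Prop :=
  (∀ x, lo x ≤ hi x) ∧ lowerBaire lo = lo ∧ upperBaire hi = hi

/-- The pair `(lo, hi)` is a Hausdorff-continuous interval-valued function: it is
s-continuous and minimal among s-continuous interval-valued functions `(glo, ghi)`
contained in it pointwise. -/
def IsHCont {X : Type*} [TopologicalSpace X] (lo hi : X → EReal) : Prop :=
  IsSCont lo hi ∧
    ∀ glo ghi : X → EReal, IsSCont glo ghi →
      (∀ x, lo x ≤ glo x) → (∀ x, ghi x ≤ hi x) → glo = lo ∧ ghi = hi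

/-- lower function on the full plane -/
noncomputable def Flo (p : ℝ × ℝ) : EReal :=
  if p.1 < 1 then
    (if p.2 < p.1 - 1 then (1 : EReal)
     else if p.2 ≤ 0 then ((p.2 / (p.1 - 1) : ℝ) : EReal) else 0)
  else (if p.2 < (p.1 - 1) / 2 then (1 : EReal) else 0)

/-- upper function on the full plane -/
noncomputable def Fhi (p : ℝ × ℝ) : EReal :=
  if p.1 < 1 then
    (if p.2 < p.1 - 1 then (1 : EReal)
     else if p.2 ≤ 0 then ((p.2 / (p.1 - 1) : ℝ) : EReal) else 0)
  else (if p.2 ≤ (p.1 - 1) / 2 then (1 : EReal) else 0)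

lemma lowerBaire_eq_liminf {X : Type*} [TopologicalSpace X] (g : X → EReal) (x : X) :
    lowerBaire g x = liminf g (𝓝 x) := (Filter.liminf_eq_iSup_iInf).symm

lemma upperBaire_eq_limsup {X : Type*} [TopologicalSpace X] (g : X → EReal) (x : X) :
    upperBaire g x = limsup g (𝓝 x) := (Filter.limsup_eq_iInf_iSup).symm

lemma lowerBaire_le {X : Type*} [TopologicalSpace X] (g : X → EReal) (x : X) :
    lowerBaire g x ≤ g x :=
  iSup₂_le fun V hV => iInf₂_le x (mem_of_mem_nhds hV)

lemma le_upperBaire {X : Type*} [TopologicalSpace X] (g : X → EReal) (x : X) :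
    g x ≤ upperBaire g x :=
  le_iInf₂ fun V hV => le_iSup₂_of_le x (mem_of_mem_nhds hV) le_rfl

lemma le_lowerBaire {X : Type*} [TopologicalSpace X] (g : X → EReal) (x : X) {c : EReal}
    (h : ∀ y, c ≤ g y) : c ≤ lowerBaire g x :=
  le_iSup₂_of_le Set.univ univ_mem (le_iInf₂ fun y _ => h y)

lemma upperBaire_le_of {X : Type*} [TopologicalSpace X] (g : X → EReal) (x : X) {c : EReal}
    (h : ∀ y, g y ≤ c) : upperBaire g x ≤ c :=
  iInf₂_le_of_le Set.univ univ_mem (iSup₂_le fun y _ => h y)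

lemma Flo_nonneg (p : ℝ × ℝ) : 0 ≤ Flo p := by
  unfold Flo
  split_ifs with h1 h2 h3 h4
  · exact zero_le_one
  · have : (0:ℝ) ≤ p.2 / (p.1 - 1) := div_nonneg_of_nonpos h3 (by linarith)
    exact_mod_cast EReal.coe_nonneg.mpr this
  · exact le_rfl
  · exact zero_le_one
  · exact le_rfl

lemma Fhi_le_one (p : ℝ × ℝ) : Fhi p ≤ 1 := by
  unfold Fhi
  split_ifs with h1 h2 h3 h4
  · exact le_rfl
  · have : p.2 / (p.1 - 1) ≤ 1 := by
      rw [div_le_one_iff]; right; right; exact ⟨by linarith, by linarith [not_lt.mp h2]⟩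
    calc ((p.2 / (p.1 - 1) : ℝ) : EReal) ≤ ((1:ℝ) : EReal) := EReal.coe_le_coe_iff.mpr this
      _ = 1 := EReal.coe_one
  · exact zero_le_one
  · exact le_rfl
  · exact zero_le_one

lemma Flo_le_Fhi (p : ℝ × ℝ) : Flo p ≤ Fhi p := by
  unfold Flo Fhi
  split_ifs with h1 h2 h3 h4 h5
  · exact le_rfl
  · exact le_rfl
  · exact le_rfl
  · exact le_rfl
  · exact absurd h4.le h5
  · exact zero_le_one
  · exact le_rfl

lemma Flo_eq_Fhi {p : ℝ × ℝ} (h : ¬(1 ≤ p.1 ∧ p.2 = (p.1 - 1) / 2)) : Flo p = Fhi p := by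
  unfold Flo Fhi
  by_cases h1 : p.1 < 1
  · simp [h1]
  · push_neg at h
    have hne : p.2 ≠ (p.1 - 1) / 2 := h (not_lt.mp h1)
    simp only [h1, if_false]
    rcases lt_or_gt_of_ne hne with hlt | hgt
    · simp [hlt, hlt.le]
    · simp [not_lt.mpr hgt.le, not_le.mpr hgt]

lemma Flo_shock {p : ℝ × ℝ} (h1 : 1 ≤ p.1) (h2 : p.2 = (p.1 - 1) / 2) : Flo p = 0 := by
  unfold Flo; simp [not_lt.mpr h1, h2]

lemma Fhi_shock {p : ℝ × ℝ} (h1 : 1 ≤ p.1) (h2 : p.2 = (p.1 - 1) / 2) : Fhi p = 1 := by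
  unfold Fhi; simp [not_lt.mpr h1, h2.le]

/-- closed form on {t < 1} -/
lemma Flo_closed {p : ℝ × ℝ} (h : p.1 < 1) :
    Flo p = ((max 0 (min 1 (p.2 / (p.1 - 1))) : ℝ) : EReal) := by
  have ht : p.1 - 1 < 0 := by linarith
  unfold Flo
  rw [if_pos h]
  by_cases h1 : p.2 < p.1 - 1
  · have : (1:ℝ) < p.2 / (p.1 - 1) := by
      rw [lt_div_iff_of_neg ht]; linarith
    rw [if_pos h1, min_eq_left this.le, max_eq_right zero_le_one, EReal.coe_one]
  · rw [if_neg h1]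
    by_cases h2 : p.2 ≤ 0
    · have hr0 : (0:ℝ) ≤ p.2 / (p.1 - 1) := div_nonneg_of_nonpos h2 ht.le
      have hr1 : p.2 / (p.1 - 1) ≤ 1 := by
        rw [div_le_one_iff]; right; right; exact ⟨ht, by linarith [not_lt.mp h1]⟩
      rw [if_pos h2, min_eq_right hr1, max_eq_right hr0]
    · have hr : p.2 / (p.1 - 1) < 0 := div_neg_of_pos_of_neg (by linarith [not_le.mp h2]) ht
      rw [if_neg h2, min_eq_right (by linarith : p.2 / (p.1 - 1) ≤ 1),
        max_eq_left hr.le, EReal.coe_zero]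

lemma Fhi_closed {p : ℝ × ℝ} (h : p.1 < 1) :
    Fhi p = ((max 0 (min 1 (p.2 / (p.1 - 1))) : ℝ) : EReal) := by
  rw [← Flo_closed h, Flo_eq_Fhi (by push_neg; intro h'; linarith)]

def O1 : Set (ℝ × ℝ) := {p | p.2 < min (p.1 - 1) ((p.1 - 1) / 2)}
def O0 : Set (ℝ × ℝ) := {p | max 0 ((p.1 - 1) / 2) < p.2}

lemma isOpen_O1 : IsOpen O1 :=
  isOpen_lt continuous_snd (((continuous_fst.sub continuous_const)).min
    ((continuous_fst.sub continuous_const).div_const 2))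

lemma isOpen_O0 : IsOpen O0 :=
  isOpen_lt (continuous_const.max ((continuous_fst.sub continuous_const).div_const 2))
    continuous_snd

lemma Flo_O1 {p : ℝ × ℝ} (h : p ∈ O1) : Flo p = 1 := by
  have h' := h
  simp only [O1, Set.mem_setOf_eq, lt_min_iff] at h'
  unfold Flo
  by_cases h1 : p.1 < 1 <;> simp [h1, h'.1, h'.2]

lemma Fhi_O1 {p : ℝ × ℝ} (h : p ∈ O1) : Fhi p = 1 := by
  have h' := h
  simp only [O1, Set.mem_setOf_eq, lt_min_iff] at h'
  unfold Fhi
  by_cases h1 : p.1 < 1 <;> simp [h1, h'.1, h'.2, h'.2.le]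

lemma Flo_O0 {p : ℝ × ℝ} (h : p ∈ O0) : Flo p = 0 := by
  have h' := h
  simp only [O0, Set.mem_setOf_eq, max_lt_iff] at h'
  unfold Flo
  by_cases h1 : p.1 < 1
  · have : ¬ p.2 < p.1 - 1 := by push_neg; nlinarith [h'.1]
    simp [h1, this, not_le.mpr h'.1]
  · simp [h1, not_lt.mpr h'.2.le]

lemma Fhi_O0 {p : ℝ × ℝ} (h : p ∈ O0) : Fhi p = 0 := by
  have h' := h
  simp only [O0, Set.mem_setOf_eq, max_lt_iff] at h'
  unfold Fhi
  by_cases h1 : p.1 < 1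
  · have : ¬ p.2 < p.1 - 1 := by push_neg; nlinarith [h'.1]
    simp [h1, this, not_le.mpr h'.1]
  · simp [h1, not_le.mpr h'.2]

lemma cont_off {p : ℝ × ℝ} (h : ¬(1 ≤ p.1 ∧ p.2 = (p.1 - 1) / 2)) :
    ContinuousAt Flo p ∧ ContinuousAt Fhi p := by
  by_cases h1 : p.1 < 1
  · have hopen : {q : ℝ × ℝ | q.1 < 1} ∈ 𝓝 p :=
      (isOpen_lt continuous_fst continuous_const).mem_nhds h1
    have hdiv : ContinuousAt (fun q : ℝ × ℝ => q.2 / (q.1 - 1)) p :=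
      continuousAt_snd.div (continuousAt_fst.sub continuousAt_const) (sub_ne_zero.mpr h1.ne)
    have hr : ContinuousAt (fun q : ℝ × ℝ => max 0 (min 1 (q.2 / (q.1 - 1)))) p :=
      ((continuous_const.max (continuous_const.min continuous_id)).continuousAt).comp hdiv
    have hc : ContinuousAt (fun q : ℝ × ℝ => ((max 0 (min 1 (q.2 / (q.1 - 1))) : ℝ) : EReal)) p :=
      continuous_coe_real_ereal.continuousAt.comp hr
    constructor
    · exact hc.congr (eventually_of_mem hopen fun q hq => (Flo_closed hq).symm)
    · exact hc.congr (eventually_of_mem hopen fun q hq => (Fhi_closed hq).symm)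
  · push_neg at h1 h
    have hne := h h1
    rcases lt_or_gt_of_ne hne with hlt | hgt
    · have hmem : p ∈ O1 := by
        simp only [O1, Set.mem_setOf_eq, lt_min_iff]
        constructor <;> [linarith; linarith]
      have hn := isOpen_O1.mem_nhds hmem
      exact ⟨Filter.EventuallyEq.continuousAt (y := 1)
          (eventually_of_mem hn fun q hq => Flo_O1 hq),
        Filter.EventuallyEq.continuousAt (y := 1)
          (eventually_of_mem hn fun q hq => Fhi_O1 hq)⟩
    · have hmem : p ∈ O0 := by
        simp only [O0, Set.mem_setOf_eq, max_lt_iff]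
        constructor <;> [linarith; linarith]
      have hn := isOpen_O0.mem_nhds hmem
      exact ⟨Filter.EventuallyEq.continuousAt (y := 0)
          (eventually_of_mem hn fun q hq => Flo_O0 hq),
        Filter.EventuallyEq.continuousAt (y := 0)
          (eventually_of_mem hn fun q hq => Fhi_O0 hq)⟩

lemma dist_shift (q : ↥{p : ℝ × ℝ | 0 ≤ p.1}) (ε : ℝ) (hε : 0 < ε) (c : ℝ)
    (hc : c = q.1.2 + ε / 2 ∨ c = q.1.2 - ε / 2) :
    dist (⟨(q.1.1, c), q.2⟩ : ↥{p : ℝ × ℝ | 0 ≤ p.1}) q < ε := by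
  rw [Subtype.dist_eq, Prod.dist_eq]
  have h1 : dist ((q.1.1, c) : ℝ × ℝ).1 q.1.1 = 0 := by simp
  have h2 : dist ((q.1.1, c) : ℝ × ℝ).2 q.1.2 = ε / 2 := by
    rcases hc with h | h <;> simp [h, Real.dist_eq, abs_of_nonneg, abs_of_nonpos, hε.le] <;>
      rw [abs_of_nonneg (by linarith)] <;> ring
  rw [h1, h2]
  simp only [sup_le_iff, max_lt_iff]
  exact ⟨hε, by linarith⟩

lemma shock_main :
    IsHCont (X := ↥{p : ℝ × ℝ | 0 ≤ p.1}) (fun q => Flo q.1) (fun q => Fhi q.1) := by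
  constructor
  · refine ⟨fun q => Flo_le_Fhi q.1, ?_, ?_⟩
    · funext q
      by_cases hs : 1 ≤ q.1.1 ∧ q.1.2 = (q.1.1 - 1) / 2
      · refine le_antisymm (lowerBaire_le (fun q : ↥{p : ℝ × ℝ | 0 ≤ p.1} => Flo q.1) q) ?_
        rw [Flo_shock hs.1 hs.2]
        refine le_trans ?_ (le_lowerBaire (fun q : ↥{p : ℝ × ℝ | 0 ≤ p.1} => Flo q.1) q (fun y => Flo_nonneg y.1))
        exact le_rfl
      · have hc : ContinuousAt (fun q : ↥{p : ℝ × ℝ | 0 ≤ p.1} => Flo q.1) q :=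
          (cont_off hs).1.comp continuousAt_subtype_val
        rw [lowerBaire_eq_liminf]
        exact Filter.Tendsto.liminf_eq hc
    · funext q
      by_cases hs : 1 ≤ q.1.1 ∧ q.1.2 = (q.1.1 - 1) / 2
      · refine le_antisymm ?_ (le_upperBaire (fun q : ↥{p : ℝ × ℝ | 0 ≤ p.1} => Fhi q.1) q)
        rw [Fhi_shock hs.1 hs.2]
        exact upperBaire_le_of (fun q : ↥{p : ℝ × ℝ | 0 ≤ p.1} => Fhi q.1) q (fun y => Fhi_le_one y.1)
      · have hc : ContinuousAt (fun q : ↥{p : ℝ × ℝ | 0 ≤ p.1} => Fhi q.1) q :=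
          (cont_off hs).2.comp continuousAt_subtype_val
        rw [upperBaire_eq_limsup]
        exact Filter.Tendsto.limsup_eq hc
  · rintro glo ghi ⟨hle, hglo, hghi⟩ hlo hhi
    constructor
    · funext q
      refine le_antisymm ?_ (hlo q)
      by_cases hs : 1 ≤ q.1.1 ∧ q.1.2 = (q.1.1 - 1) / 2
      · rw [Flo_shock hs.1 hs.2, ← hglo]
        refine iSup₂_le fun V hV => ?_
        obtain ⟨ε, hε, hball⟩ := Metric.mem_nhds_iff.mp hV
        set y : ↥{p : ℝ × ℝ | 0 ≤ p.1} := ⟨(q.1.1, q.1.2 + ε / 2), q.2⟩ with hy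
        have hyV : y ∈ V := hball (Metric.mem_ball.mpr (dist_shift q ε hε _ (Or.inl rfl)))
        refine iInf₂_le_of_le y hyV ?_
        calc glo y ≤ ghi y := hle y
          _ ≤ Fhi y.1 := hhi y
          _ = 0 := by
              unfold Fhi
              have h1 : ¬ ((y : ℝ × ℝ).1 < 1) := not_lt.mpr hs.1
              have h2 : ¬ ((y : ℝ × ℝ).2 ≤ ((y : ℝ × ℝ).1 - 1) / 2) := by
                simp only [hy]
                rw [hs.2] at *
                push_neg
                linarith
              simp [h1, h2]
      · calc glo q ≤ ghi q := hle q
          _ ≤ Fhi q.1 := hhi q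
          _ = Flo q.1 := (Flo_eq_Fhi hs).symm
    · funext q
      refine le_antisymm (hhi q) ?_
      by_cases hs : 1 ≤ q.1.1 ∧ q.1.2 = (q.1.1 - 1) / 2
      · rw [Fhi_shock hs.1 hs.2, ← hghi]
        refine le_iInf₂ fun V hV => ?_
        obtain ⟨ε, hε, hball⟩ := Metric.mem_nhds_iff.mp hV
        set y : ↥{p : ℝ × ℝ | 0 ≤ p.1} := ⟨(q.1.1, q.1.2 - ε / 2), q.2⟩ with hy
        have hyV : y ∈ V := hball (Metric.mem_ball.mpr (dist_shift q ε hε _ (Or.inr rfl)))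
        refine le_iSup₂_of_le y hyV ?_
        calc (1 : EReal) = Flo y.1 := by
              unfold Flo
              have h1 : ¬ ((y : ℝ × ℝ).1 < 1) := not_lt.mpr hs.1
              have h2 : (y : ℝ × ℝ).2 < ((y : ℝ × ℝ).1 - 1) / 2 := by
                simp only [hy]
                rw [hs.2] at *
                linarith
              simp [h1, h2]
          _ ≤ glo y := hlo y
          _ ≤ ghi y := hle y
      · calc Fhi q.1 = Flo q.1 := (Flo_eq_Fhi hs).symm
          _ ≤ glo q := hlo q
          _ ≤ ghi q := hle q

/-- Example A2: the shock wave solution U of U_t + U U_x = 0 on Ω = [0, ∞) × ℝ,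
as an interval-valued function taking the interval [0, 1] on the shock line
x = (t − 1)/2, t ≥ 1, is Hausdorff-continuous on Ω (with its subspace topology). -/
theorem shock_wave_hCont :
    IsHCont
      (fun q : ↥{p : ℝ × ℝ | 0 ≤ p.1} =>
        if q.1.1 < 1 then
          (if q.1.2 < q.1.1 - 1 then (1 : EReal)
           else if q.1.2 ≤ 0 then ((q.1.2 / (q.1.1 - 1) : ℝ) : EReal) else 0)
        else (if q.1.2 < (q.1.1 - 1) / 2 then (1 : EReal) else 0))
      (fun q : ↥{p : ℝ × ℝ | 0 ≤ p.1} =>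
        if q.1.1 < 1 then
          (if q.1.2 < q.1.1 - 1 then (1 : EReal)
           else if q.1.2 ≤ 0 then ((q.1.2 / (q.1.1 - 1) : ℝ) : EReal) else 0)
        else (if q.1.2 ≤ (q.1.1 - 1) / 2 then (1 : EReal) else 0)) := by
  exact shock_main
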